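/- arXiv:1808.07631 — 2 statements merged into one kernel-verified Lean document; each statement's English description precedes it below -/
import Mathlib

section
/- Let N ≥ 2, let α_1, …, α_N be nonnegative integers with α_1 + ⋯ + α_N = p where 1 ≤ p ≤ N − 1, and let M be the number of nonzero α_j (so 1 ≤ M ≤ N − 1). Then the coefficient of the monomial η_1^{α_1} ⋯ η_N^{α_N} in the expansion of Σ_{ℓ=1}^{N} Σ_{1≤m_1<⋯<m_ℓ≤N} (−1)^ℓ (η_{m_1}+⋯+η_{m_ℓ})^p is (p choose α_1,…,α_N) · (−1)^M · Σ_{j=0}^{N−M} (−1)^j C(N−M, j), and this equals 0. -/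
open Finset MvPolynomial

lemma aux_coeff {N : ℕ} (s : Finset (Fin N)) (p : ℕ) (α : Fin N →₀ ℕ) (hα : ∑ j, α j = p) :
    MvPolynomial.coeff α ((∑ i ∈ s, X i : MvPolynomial (Fin N) ℝ) ^ p) =
      if α.support ⊆ s then (Nat.multinomial Finset.univ α : ℝ) else 0 := by
  classical
  rw [Finset.sum_pow_eq_sum_piAntidiag, MvPolynomial.coeff_sum]
  have key : ∀ k ∈ piAntidiag s p,
      MvPolynomial.coeff α ((Nat.multinomial s k : MvPolynomial (Fin N) ℝ) * ∏ i ∈ s, X i ^ k i)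
        = if k = ⇑α then (Nat.multinomial s k : ℝ) else 0 := by
    intro k hk
    rw [mem_piAntidiag] at hk
    set g : Fin N →₀ ℕ := Finsupp.equivFunOnFinite.symm k with hg
    have hgk : ⇑g = k := rfl
    have hsupp : g.support ⊆ s := by
      intro i hi
      have := Finsupp.mem_support_iff.mp hi
      rw [hgk] at this
      exact hk.2 i this
    have hprod : (∏ i ∈ s, (X i : MvPolynomial (Fin N) ℝ) ^ k i) = monomial g 1 := by
      rw [← MvPolynomial.prod_X_pow_eq_monomial]
      refine (Finset.prod_subset hsupp (fun i _ hi => ?_)).symm.trans ?_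
      · have : g i = 0 := Finsupp.notMem_support_iff.mp hi
        rw [hgk] at this
        rw [this, pow_zero]
      · exact Finset.prod_congr rfl fun i _ => by rw [hgk]
    rw [hprod, ← map_natCast (C : ℝ →+* MvPolynomial (Fin N) ℝ), coeff_C_mul, coeff_monomial]
    have : (g = α) = (k = ⇑α) := by
      rw [← hgk]
      simp [DFunLike.ext_iff, funext_iff]
    by_cases h : k = ⇑α
    · rw [if_pos h, if_pos (by rw [← hgk] at h; exact DFunLike.coe_injective h), mul_one]
    · rw [if_neg h, if_neg (fun he => h (by rw [← he, hgk])), mul_zero]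
  rw [Finset.sum_congr rfl key, Finset.sum_ite_eq' (piAntidiag s p) (⇑α)
    (fun k => (Nat.multinomial s k : ℝ))]
  by_cases h : α.support ⊆ s
  · have hz : ∀ x ∈ univ, x ∉ s → α x = 0 := fun x _ hx => by
      by_contra hne
      exact hx (h (Finsupp.mem_support_iff.mpr hne))
    have hmem : ⇑α ∈ piAntidiag s p := by
      rw [mem_piAntidiag]
      refine ⟨?_, fun i hi => h (Finsupp.mem_support_iff.mpr hi)⟩
      rw [Finset.sum_subset (subset_univ s) hz]
      exact hα
    rw [if_pos hmem, if_pos h]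
    congr 1
    unfold Nat.multinomial
    rw [Finset.sum_subset (subset_univ s) hz,
      Finset.prod_subset (subset_univ s) (fun x hx hxs => by rw [hz x hx hxs, Nat.factorial_zero])]
  · rw [if_neg h, if_neg (fun hmem => ?_)]
    rw [mem_piAntidiag] at hmem
    exact h fun i hi => hmem.2 i (Finsupp.mem_support_iff.mp hi)

open MvPolynomial in
/-- The coefficient of the monomial `η^α` in the alternating sum over nonempty subsets of
`(η_{m_1} + ⋯ + η_{m_ℓ})^p` is the multinomial coefficient times `(-1)^M (1-1)^{N-M}`,
and it vanishes. Here `M` is the number of nonzero `α_j`. -/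
theorem stmt1 (N p : ℕ) (hN : 2 ≤ N) (hp1 : 1 ≤ p) (hp2 : p ≤ N - 1)
    (α : Fin N →₀ ℕ) (hα : ∑ j, α j = p)
    (M : ℕ) (hM : M = (Finset.univ.filter (fun j : Fin N => α j ≠ 0)).card)
    (hM1 : 1 ≤ M) (hM2 : M ≤ N - 1) :
    MvPolynomial.coeff α
        (∑ s ∈ Finset.univ.powerset.filter (fun s : Finset (Fin N) => s.Nonempty),
          (-1 : MvPolynomial (Fin N) ℝ) ^ s.card * (∑ i ∈ s, X i) ^ p)
      = (Nat.multinomial Finset.univ α : ℝ) * (-1 : ℝ) ^ M *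
          ∑ j ∈ Finset.range (N - M + 1), (-1 : ℝ) ^ j * ((N - M).choose j : ℝ) ∧
    MvPolynomial.coeff α
        (∑ s ∈ Finset.univ.powerset.filter (fun s : Finset (Fin N) => s.Nonempty),
          (-1 : MvPolynomial (Fin N) ℝ) ^ s.card * (∑ i ∈ s, X i) ^ p)
      = 0 := by
  classical
  set S := α.support with hSdef
  set A : ℝ := (Nat.multinomial Finset.univ α : ℝ) with hA
  have hS : S = Finset.univ.filter (fun j : Fin N => α j ≠ 0) := by
    ext j; simp [hSdef, Finsupp.mem_support_iff]
  have hMcard : S.card = M := by rw [hS, hM]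
  have hSne : S.Nonempty := Finset.card_pos.mp (by omega)
  have hNM0 : N - M ≠ 0 := by omega
  -- the RHS alternating sum vanishes
  have hR : (∑ j ∈ Finset.range (N - M + 1), (-1 : ℝ) ^ j * ((N - M).choose j : ℝ)) = 0 := by
    have h := Int.alternating_sum_range_choose_of_ne hNM0
    exact_mod_cast congrArg (Int.cast : ℤ → ℝ) h
  -- compute the LHS
  have hL : MvPolynomial.coeff α
        (∑ s ∈ Finset.univ.powerset.filter (fun s : Finset (Fin N) => s.Nonempty),
          (-1 : MvPolynomial (Fin N) ℝ) ^ s.card * (∑ i ∈ s, X i) ^ p)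
      = 0 := by
    rw [MvPolynomial.coeff_sum]
    have key : ∀ s ∈ Finset.univ.powerset.filter (fun s : Finset (Fin N) => s.Nonempty),
        MvPolynomial.coeff α ((-1 : MvPolynomial (Fin N) ℝ) ^ s.card * (∑ i ∈ s, X i) ^ p)
          = (-1 : ℝ) ^ s.card * (if S ⊆ s then A else 0) := by
      intro s _
      have hC : ((-1 : MvPolynomial (Fin N) ℝ)) ^ s.card = C ((-1 : ℝ) ^ s.card) := by
        rw [map_pow, map_neg, map_one]
      rw [hC, coeff_C_mul, aux_coeff s p α hα]
    rw [Finset.sum_congr rfl key]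
    have step1 : (∑ s ∈ Finset.univ.powerset.filter (fun s : Finset (Fin N) => s.Nonempty),
          (-1 : ℝ) ^ s.card * (if S ⊆ s then A else 0))
        = ∑ s ∈ (Finset.univ.powerset.filter (fun s : Finset (Fin N) => S ⊆ s)),
            (-1 : ℝ) ^ s.card * A := by
      rw [Finset.sum_filter, Finset.sum_filter]
      refine Finset.sum_congr rfl fun s _ => ?_
      by_cases h : S ⊆ s
      · rw [if_pos h, if_pos (hSne.mono h), if_pos h]
      · rw [if_neg h, if_neg h, mul_zero]
        split <;> simp
    rw [step1]
    have step2 : (∑ s ∈ (Finset.univ.powerset.filter (fun s : Finset (Fin N) => S ⊆ s)),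
          (-1 : ℝ) ^ s.card * A)
        = ∑ t ∈ (Finset.univ \ S).powerset, (-1 : ℝ) ^ (t.card + M) * A := by
      refine Finset.sum_nbij' (fun s => s \ S) (fun t => t ∪ S) ?_ ?_ ?_ ?_ ?_
      · intro s hs
        simp only [Finset.mem_filter, Finset.mem_powerset] at hs ⊢
        exact Finset.sdiff_subset_sdiff hs.1 Finset.Subset.rfl
      · intro t ht
        simp only [Finset.mem_powerset] at ht
        simp only [Finset.mem_filter, Finset.mem_powerset]
        exact ⟨Finset.subset_univ _, Finset.subset_union_right⟩
      · intro s hs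
        simp only [Finset.mem_filter, Finset.mem_powerset] at hs
        exact Finset.sdiff_union_of_subset hs.2
      · intro t ht
        simp only [Finset.mem_powerset] at ht
        have hd : Disjoint t S := Finset.disjoint_left.mpr fun a hat =>
          (Finset.mem_sdiff.mp (ht hat)).2
        show (t ∪ S) \ S = t
        rw [Finset.union_sdiff_distrib, Finset.sdiff_self, Finset.union_empty,
          Finset.sdiff_eq_self_of_disjoint hd]
      · intro s hs
        simp only [Finset.mem_filter, Finset.mem_powerset] at hs
        congr 2
        rw [← hMcard, Finset.card_sdiff_add_card_eq_card hs.2]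
    rw [step2]
    have hcomp : (Finset.univ \ S).Nonempty := by
      rw [← Finset.card_pos, Finset.card_sdiff_of_subset (Finset.subset_univ S),
        Finset.card_univ, Fintype.card_fin, hMcard]
      omega
    have hzero : (∑ t ∈ (Finset.univ \ S).powerset, (-1 : ℝ) ^ t.card) = 0 := by
      have h := Finset.sum_powerset_neg_one_pow_card_of_nonempty hcomp
      exact_mod_cast congrArg (Int.cast : ℤ → ℝ) h
    calc (∑ t ∈ (Finset.univ \ S).powerset, (-1 : ℝ) ^ (t.card + M) * A)
        = (∑ t ∈ (Finset.univ \ S).powerset, (-1 : ℝ) ^ t.card) * ((-1 : ℝ) ^ M * A) := by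
          rw [Finset.sum_mul]
          exact Finset.sum_congr rfl fun t _ => by ring
      _ = 0 := by rw [hzero, zero_mul]
  exact ⟨by rw [hL, hR, mul_zero], hL⟩
end

section
/- Let j₁ ≤ j₂ ≤ ⋯ ≤ j_{2n+1} be the sorted dyadic indices and suppose |η_k| ∈ [(5/8)2^{j_k}, (8/5)2^{j_k}] for k = 1, …, 2n+1. Then |𝐓_n(η₁,…,η_{2n+1})| = |∫_ℝ ∏_{k=1}^{2n+1}(1 − e^{iη_kζ}) |ζ|^{−(2n+1)} dζ| ≤ C(n) ∏_{k=1}^{2n} |η_k| · (1 + log(|η_{2n+1}|/|η_{2n}|)), where C(n) depends only on n. In particular, if |η_{2n}| and |η_{2n+1}| are comparable (|η_{2n+1}|/|η_{2n}| ≤ K), then |𝐓_n| ≤ C(n,K) ∏_{k=1}^{2n} |η_k|, i.e. 𝐓_n is bounded by the product of the 2n smallest frequencies. -/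
/-!
Bound each factor by `|1 - e^{ix}| ≤ 2 min(|x|, 1)`, keeping the minimum only for the two largest
frequencies `a = |η_{2n+1}|`, `b = |η_{2n}|` and using `|η_k ζ|` for the others. What remains is
`2^{2n+1} ∏_{k<2n} |η_k|` times the kernel `min(a|ζ|, 1) min(b|ζ|, 1) / ζ²`, whose integral is
exactly `2 min(a, b) (2 + |log (a/b)|)`: the kernel is constant for `|ζ| ≤ 1/max(a, b)`, equal to
`min(a, b)/|ζ|` up to `1/min(a, b)` (the source of the logarithm), and `1/ζ²` beyond. If `a < b`
the logarithm in the bound is negative, but the dyadic localisation gives `b ≤ (64/25) a` and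
`log (64/25) < 1`, so `1 + log (a/b)` stays bounded below.
-/

open MeasureTheory Set Complex

noncomputable def twoScaleKernel (m M t : ℝ) : ℝ := min (m * t) 1 * min (M * t) 1 / t ^ 2

lemma twoScaleKernel_comm (m M t : ℝ) : twoScaleKernel m M t = twoScaleKernel M m t := by
  rw [twoScaleKernel, twoScaleKernel, mul_comm (min _ _)]

section TwoScaleKernel

variable {m M : ℝ}

lemma eqOn_twoScaleKernel_Ioc (hmM : m ≤ M) :
    EqOn (twoScaleKernel m M) (fun _ => m * M) (Ioc 0 (1 / M)) := fun t ht => by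
  beta_reduce
  have hM : 0 < M := one_div_pos.1 (ht.1.trans_le ht.2)
  have hMt : M * t ≤ 1 := (le_div_iff₀' hM).1 ht.2
  rw [twoScaleKernel, min_eq_left (by nlinarith [ht.1]), min_eq_left hMt]
  field_simp [ht.1.ne']

lemma eqOn_twoScaleKernel_Icc (hm : 0 < m) (hM : 0 < M) :
    EqOn (twoScaleKernel m M) (fun t => m / t) (Icc (1 / M) (1 / m)) := fun t ht => by
  beta_reduce
  have ht₀ : t ≠ 0 := ((one_div_pos.2 hM).trans_le ht.1).ne'
  rw [twoScaleKernel, min_eq_left ((le_div_iff₀' hm).1 ht.2),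
    min_eq_right ((div_le_iff₀' hM).1 ht.1)]
  field_simp

lemma eqOn_twoScaleKernel_Ioi (hm : 0 < m) (hmM : m ≤ M) :
    EqOn (twoScaleKernel m M) (fun t => t ^ (-2 : ℝ)) (Ioi (1 / m)) := fun t ht => by
  beta_reduce
  have ht₀ : 0 < t := (one_div_pos.2 hm).trans ht
  have hmt : 1 ≤ m * t := (div_le_iff₀' hm).1 (le_of_lt ht)
  rw [twoScaleKernel, min_eq_right hmt, min_eq_right (by nlinarith), Real.rpow_neg ht₀.le,
    one_mul, one_div, Real.rpow_two]

lemma integrableOn_Ioi_twoScaleKernel_and_integral_eq (hm : 0 < m) (hmM : m ≤ M) :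
    IntegrableOn (twoScaleKernel m M) (Ioi 0) ∧
      ∫ t in Ioi 0, twoScaleKernel m M t = m * (2 + Real.log (M / m)) := by
  have hM : 0 < M := hm.trans_le hmM
  have hc₁ : 0 < 1 / M := one_div_pos.2 hM
  have hc₂ : 0 < 1 / m := one_div_pos.2 hm
  have hc : 1 / M ≤ 1 / m := one_div_le_one_div_of_le hm hmM
  have near := eqOn_twoScaleKernel_Ioc hmM
  have middle := eqOn_twoScaleKernel_Icc hm hM
  have far := eqOn_twoScaleKernel_Ioi hm hmM
  have i₁ : IntegrableOn (twoScaleKernel m M) (Ioc 0 (1 / M)) :=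
    (integrableOn_const measure_Ioc_lt_top.ne).congr_fun near.symm measurableSet_Ioc
  have i₂ : IntegrableOn (twoScaleKernel m M) (Ioc (1 / M) (1 / m)) :=
    ((continuousOn_const.div continuousOn_id fun t ht =>
      (hc₁.trans_le ht.1).ne').integrableOn_Icc.congr_fun middle.symm
      measurableSet_Icc).mono_set Ioc_subset_Icc_self
  have i₃ : IntegrableOn (twoScaleKernel m M) (Ioi (1 / m)) :=
    (integrableOn_Ioi_rpow_of_lt (by norm_num) hc₂).congr_fun far.symm measurableSet_Ioi
  have i₂₃ : IntegrableOn (twoScaleKernel m M) (Ioi (1 / M)) :=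
    Ioc_union_Ioi_eq_Ioi hc ▸ i₂.union i₃
  refine ⟨Ioc_union_Ioi_eq_Ioi hc₁.le ▸ i₁.union i₂₃, ?_⟩
  have hratio : (1 / m) / (1 / M) = M / m := by field_simp
  rw [← intervalIntegral.integral_interval_add_Ioi'
      ((intervalIntegrable_iff_integrableOn_Ioc_of_le hc₁.le).2 i₁) i₂₃,
    ← intervalIntegral.integral_interval_add_Ioi'
      ((intervalIntegrable_iff_integrableOn_Ioc_of_le hc).2 i₂) i₃,
    intervalIntegral.integral_congr_ae (g := fun _ => m * M)
      (Filter.Eventually.of_forall fun t ht => near (uIoc_of_le hc₁.le ▸ ht)),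
    intervalIntegral.integral_congr (a := 1 / M) (b := 1 / m) (g := fun t => m / t)
      (uIcc_of_le hc ▸ middle),
    setIntegral_congr_fun measurableSet_Ioi far, integral_Ioi_rpow_of_lt (by norm_num) hc₂]
  simp only [intervalIntegral.integral_const, smul_eq_mul, div_eq_mul_inv m,
    intervalIntegral.integral_const_mul, integral_inv_of_pos hc₁ hc₂, hratio]
  rw [show (-2 : ℝ) + 1 = -1 by norm_num, Real.rpow_neg_one]
  field_simp
  ring

end TwoScaleKernel

lemma integrable_comp_abs_of_integrableOn_Ioi {E : Type*} [NormedAddCommGroup E] {f : ℝ → E}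
    (hf : IntegrableOn f (Ioi 0)) : Integrable fun x => f |x| := by
  have hg : Integrable ((Ioi 0).indicator f) := (integrable_indicator_iff measurableSet_Ioi).2 hf
  refine (hg.add hg.comp_neg).congr ?_
  filter_upwards [Measure.ae_ne volume 0] with x hx
  rcases hx.lt_or_gt with hx | hx
  · simp [hx, hx.not_gt, abs_of_neg hx]
  · simp [hx, hx.le, abs_of_pos hx]

section KernelOnLine

variable {a b : ℝ}

lemma integrable_twoScaleKernel_abs (ha : 0 < a) (hb : 0 < b) :
    Integrable fun ζ => twoScaleKernel a b |ζ| := by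
  rcases le_total a b with hab | hab
  · exact integrable_comp_abs_of_integrableOn_Ioi
      (integrableOn_Ioi_twoScaleKernel_and_integral_eq ha hab).1
  · simp_rw [twoScaleKernel_comm a b]
    exact integrable_comp_abs_of_integrableOn_Ioi
      (integrableOn_Ioi_twoScaleKernel_and_integral_eq hb hab).1

lemma integral_twoScaleKernel_abs (ha : 0 < a) (hb : 0 < b) :
    ∫ ζ, twoScaleKernel a b |ζ| = 2 * min a b * (2 + |Real.log (a / b)|) := by
  wlog hab : a ≤ b generalizing a b
  · simp_rw [twoScaleKernel_comm a b]
    rw [this hb ha (le_of_not_ge hab), min_comm, ← abs_neg, ← Real.log_inv, inv_div]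
  rw [integral_comp_abs, (integrableOn_Ioi_twoScaleKernel_and_integral_eq ha hab).2,
    min_eq_left hab, ← abs_neg, ← Real.log_inv, inv_div,
    abs_of_nonneg (Real.log_nonneg ((one_le_div ha).2 hab))]
  ring

lemma min_mul_two_add_abs_log_le {κ : ℝ} (ha : 0 < a) (hb : 0 < b) (hκ : 1 ≤ κ)
    (hκe : Real.log κ < 1) (hba : b ≤ κ * a) :
    min a b * (2 + |Real.log (a / b)|) ≤ 3 / (1 - Real.log κ) * (b * (1 + Real.log (a / b))) := by
  have hlogκ : 0 ≤ Real.log κ := Real.log_nonneg hκ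
  have hgap : 0 < 1 - Real.log κ := by linarith
  have hC : 3 ≤ 3 / (1 - Real.log κ) := by
    rw [le_div_iff₀ hgap]
    nlinarith
  rcases le_total b a with hab | hab
  · have hL : 0 ≤ Real.log (a / b) := Real.log_nonneg ((one_le_div hb).2 hab)
    rw [min_eq_right hab, abs_of_nonneg hL]
    calc b * (2 + Real.log (a / b)) ≤ 3 * (b * (1 + Real.log (a / b))) := by nlinarith
      _ ≤ 3 / (1 - Real.log κ) * (b * (1 + Real.log (a / b))) := by gcongr
  · have hL : Real.log (a / b) ≤ 0 := Real.log_nonpos (by positivity) ((div_le_one hb).2 hab)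
    have hLκ : -Real.log κ ≤ Real.log (a / b) := by
      rw [neg_le, ← Real.log_inv, inv_div]
      exact Real.log_le_log (by positivity) ((div_le_iff₀ ha).2 hba)
    rw [min_eq_left hab, abs_of_nonpos hL]
    calc a * (2 + -Real.log (a / b)) ≤ b * 3 := by nlinarith
      _ = 3 / (1 - Real.log κ) * (b * (1 - Real.log κ)) := by field_simp
      _ ≤ 3 / (1 - Real.log κ) * (b * (1 + Real.log (a / b))) := by gcongr; linarith

end KernelOnLine

lemma norm_one_sub_exp_I_mul_le (x : ℝ) : ‖1 - exp (I * x)‖ ≤ 2 * min |x| 1 := by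
  rw [norm_sub_rev, mul_min_of_nonneg _ _ zero_le_two, mul_one]
  refine le_min ?_ ?_
  · have := Real.norm_exp_I_mul_ofReal_sub_one_le (x := x)
    rw [Real.norm_eq_abs] at this
    linarith [abs_nonneg x]
  · calc ‖exp (I * x) - 1‖ ≤ ‖exp (I * x)‖ + ‖(1 : ℂ)‖ := norm_sub_le _ _
      _ = 2 := by rw [norm_exp_I_mul_ofReal, norm_one]; norm_num

section Symbol

open Finset

variable {ι : Type*} [Fintype ι] [DecidableEq ι] (η : ι → ℝ) {i i' : ι}

lemma norm_prod_one_sub_exp_le (hi : i' ≠ i) (ζ : ℝ) :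
    ‖∏ k, (1 - exp (I * η k * ζ))‖ ≤
      2 ^ Fintype.card ι * (∏ k ∈ (univ.erase i).erase i', |η k|) *
        |ζ| ^ (Fintype.card ι - 2) * (min (|η i| * |ζ|) 1 * min (|η i'| * |ζ|) 1) := by
  have hi' : i' ∈ univ.erase i := mem_erase.2 ⟨hi, mem_univ _⟩
  have hfactor (k : ι) : ‖1 - exp (I * η k * ζ)‖ ≤ 2 * min (|η k| * |ζ|) 1 := by
    simpa [abs_mul, mul_assoc] using norm_one_sub_exp_I_mul_le (η k * ζ)
  have hcard : ((univ.erase i).erase i').card = Fintype.card ι - 2 := by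
    rw [card_erase_of_mem hi', card_erase_of_mem (mem_univ _), card_univ]
    omega
  have hrest : ∏ k ∈ (univ.erase i).erase i', min (|η k| * |ζ|) 1 ≤
      (∏ k ∈ (univ.erase i).erase i', |η k|) * |ζ| ^ (Fintype.card ι - 2) := by
    rw [← hcard, ← prod_const, ← prod_mul_distrib]
    exact prod_le_prod (fun _ _ => by positivity) fun _ _ => min_le_left _ _
  calc ‖∏ k, (1 - exp (I * η k * ζ))‖ = ∏ k, ‖1 - exp (I * η k * ζ)‖ := norm_prod _ _
    _ ≤ ∏ k, 2 * min (|η k| * |ζ|) 1 :=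
      prod_le_prod (fun _ _ => norm_nonneg _) fun k _ => hfactor k
    _ = 2 ^ Fintype.card ι * (min (|η i| * |ζ|) 1 * (min (|η i'| * |ζ|) 1 *
          ∏ k ∈ (univ.erase i).erase i', min (|η k| * |ζ|) 1)) := by
      rw [prod_mul_distrib, prod_const, card_univ, ← mul_prod_erase _ _ (mem_univ i),
        ← mul_prod_erase _ _ hi']
    _ ≤ 2 ^ Fintype.card ι * (min (|η i| * |ζ|) 1 * (min (|η i'| * |ζ|) 1 *
          ((∏ k ∈ (univ.erase i).erase i', |η k|) * |ζ| ^ (Fintype.card ι - 2)))) := by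
      gcongr
    _ = _ := by ring

lemma norm_prod_one_sub_exp_div_le (hi : i' ≠ i) (ζ : ℝ) :
    ‖(∏ k, (1 - exp (I * η k * ζ))) / ((|ζ| : ℝ) : ℂ) ^ Fintype.card ι‖ ≤
      2 ^ Fintype.card ι * (∏ k ∈ (univ.erase i).erase i', |η k|) *
        twoScaleKernel |η i| |η i'| |ζ| := by
  have hN : 2 ≤ Fintype.card ι := Fintype.one_lt_card_iff.2 ⟨i, i', hi.symm⟩
  rcases eq_or_ne ζ 0 with rfl | hζ
  · simp [twoScaleKernel, zero_pow (by omega : Fintype.card ι ≠ 0)]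
  have hpow : |ζ| ^ Fintype.card ι = |ζ| ^ (Fintype.card ι - 2) * |ζ| ^ 2 := by
    rw [← pow_add, Nat.sub_add_cancel hN]
  rw [norm_div, norm_pow, Complex.norm_real, Real.norm_eq_abs, abs_abs, twoScaleKernel, hpow,
    div_le_iff₀ (by positivity)]
  calc _ ≤ _ := norm_prod_one_sub_exp_le η hi ζ
    _ = _ := by field_simp

theorem norm_integral_prod_one_sub_exp_div_le (hi : i' ≠ i) {κ : ℝ} (hκ : 1 ≤ κ)
    (hκe : Real.log κ < 1) (hη : 0 < |η i|) (hη' : 0 < |η i'|) (hηκ : |η i'| ≤ κ * |η i|) :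
    ‖∫ ζ : ℝ, (∏ k, (1 - exp (I * η k * ζ))) / ((|ζ| : ℝ) : ℂ) ^ Fintype.card ι‖ ≤
      2 ^ Fintype.card ι * (6 / (1 - Real.log κ)) * (∏ k ∈ univ.erase i, |η k|) *
        (1 + Real.log (|η i| / |η i'|)) := by
  set P := ∏ k ∈ (univ.erase i).erase i', |η k|
  calc _ ≤ ∫ ζ : ℝ, 2 ^ Fintype.card ι * P * twoScaleKernel |η i| |η i'| |ζ| :=
        norm_integral_le_of_norm_le ((integrable_twoScaleKernel_abs hη hη').const_mul _)
          (ae_of_all _ (norm_prod_one_sub_exp_div_le η hi))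
    _ = 2 ^ Fintype.card ι * P *
          (2 * (min |η i| |η i'| * (2 + |Real.log (|η i| / |η i'|)|))) := by
      rw [integral_const_mul, integral_twoScaleKernel_abs hη hη', mul_assoc 2]
    _ ≤ 2 ^ Fintype.card ι * P *
          (2 * (3 / (1 - Real.log κ) * (|η i'| * (1 + Real.log (|η i| / |η i'|))))) := by
      gcongr _ * (2 * ?_)
      exact min_mul_two_add_abs_log_le hη hη' hκ hκe hηκ
    _ = _ := by
      rw [← mul_prod_erase (univ.erase i) _ (mem_erase.2 ⟨hi, mem_univ _⟩)]
      ring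

end Symbol

lemma abs_le_mul_abs_of_dyadic {ι : Type*} [Preorder ι] {j : ι → ℤ} {η : ι → ℝ}
    (hj : Monotone j)
    (hη : ∀ k, |η k| ∈ Icc ((5 / 8 : ℝ) * 2 ^ j k) ((8 / 5 : ℝ) * 2 ^ j k)) {k l : ι}
    (hkl : k ≤ l) : |η k| ≤ 64 / 25 * |η l| :=
  calc |η k| ≤ 8 / 5 * (2 : ℝ) ^ j k := (hη k).2
    _ ≤ 8 / 5 * (2 : ℝ) ^ j l := by gcongr; exacts [one_le_two, hj hkl]
    _ = 64 / 25 * (5 / 8 * 2 ^ j l) := by ring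
    _ ≤ 64 / 25 * |η l| := by gcongr; exact (hη l).1

lemma log_64_div_25_lt_one : Real.log (64 / 25) < 1 := by
  rw [Real.log_lt_iff_lt_exp (by norm_num)]
  calc (64 : ℝ) / 25 < 2.7182818283 := by norm_num
    _ < Real.exp 1 := Real.exp_one_gt_d9

theorem norm_integral_symbol_le_of_dyadic (n : ℕ) (hn : 1 ≤ n) (j : Fin (2 * n + 1) → ℤ)
    (η : Fin (2 * n + 1) → ℝ) (hj : Monotone j)
    (hη : ∀ k, |η k| ∈ Icc ((5 / 8 : ℝ) * 2 ^ j k) ((8 / 5 : ℝ) * 2 ^ j k)) :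
    ‖∫ ζ : ℝ, (∏ k, (1 - exp (I * η k * ζ))) / ((|ζ| : ℝ) : ℂ) ^ (2 * n + 1)‖ ≤
      2 ^ (2 * n + 1) * (6 / (1 - Real.log (64 / 25))) *
        (∏ k ∈ Finset.univ.erase (Fin.last (2 * n)), |η k|) *
        (1 + Real.log (|η (Fin.last (2 * n))| /
          |η ⟨2 * n - 1, Nat.lt_succ_of_le (Nat.sub_le _ _)⟩|)) := by
  have hpos (k) : 0 < |η k| := (by positivity : (0 : ℝ) < 5 / 8 * 2 ^ j k).trans_le (hη k).1
  have hne : (⟨2 * n - 1, Nat.lt_succ_of_le (Nat.sub_le _ _)⟩ : Fin (2 * n + 1)) ≠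
      Fin.last (2 * n) := by
    simp only [ne_eq, Fin.ext_iff, Fin.val_last]
    omega
  have := norm_integral_prod_one_sub_exp_div_le η hne (by norm_num) log_64_div_25_lt_one
    (hpos _) (hpos _) (abs_le_mul_abs_of_dyadic hj hη (Fin.le_last _))
  rwa [Fintype.card_fin] at this

/-- Bound for the multilinear symbol `𝐓_n`: if the frequencies `η_k` are sorted into
nondecreasing dyadic blocks `|η_k| ∈ [(5/8)2^{j_k}, (8/5)2^{j_k}]` with `j` monotone, then
`|𝐓_n(η)| ≤ C(n) (∏_{k=1}^{2n} |η_k|)(1 + log(|η_{2n+1}|/|η_{2n}|))`; in particular, if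
the top two frequencies are comparable (`|η_{2n+1}|/|η_{2n}| ≤ K`), then `𝐓_n` is bounded
by the product of the `2n` smallest frequencies. -/
theorem stmt19 (n : ℕ) (hn : 1 ≤ n) :
    (∃ C > (0 : ℝ), ∀ (j : Fin (2 * n + 1) → ℤ) (η : Fin (2 * n + 1) → ℝ),
      Monotone j →
      (∀ k, |η k| ∈ Set.Icc ((5 / 8 : ℝ) * 2 ^ j k) ((8 / 5 : ℝ) * 2 ^ j k)) →
      ‖∫ ζ : ℝ, (∏ k, (1 - Complex.exp (Complex.I * η k * ζ))) /
          ((|ζ| : ℝ) : ℂ) ^ (2 * n + 1)‖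
        ≤ C * (∏ k ∈ Finset.univ.erase (Fin.last (2 * n)), |η k|) *
            (1 + Real.log (|η (Fin.last (2 * n))| / |η ⟨2 * n - 1, by omega⟩|))) ∧
    ∀ K > (0 : ℝ), ∃ C > (0 : ℝ),
      ∀ (j : Fin (2 * n + 1) → ℤ) (η : Fin (2 * n + 1) → ℝ),
      Monotone j →
      (∀ k, |η k| ∈ Set.Icc ((5 / 8 : ℝ) * 2 ^ j k) ((8 / 5 : ℝ) * 2 ^ j k)) →
      |η (Fin.last (2 * n))| / |η ⟨2 * n - 1, by omega⟩| ≤ K →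
      ‖∫ ζ : ℝ, (∏ k, (1 - Complex.exp (Complex.I * η k * ζ))) /
          ((|ζ| : ℝ) : ℂ) ^ (2 * n + 1)‖
        ≤ C * ∏ k ∈ Finset.univ.erase (Fin.last (2 * n)), |η k| := by
  set C : ℝ := 2 ^ (2 * n + 1) * (6 / (1 - Real.log (64 / 25)))
  have hC : 0 < C := by
    have := log_64_div_25_lt_one
    have : 0 < 1 - Real.log (64 / 25) := by linarith
    positivity
  refine ⟨⟨C, hC, norm_integral_symbol_le_of_dyadic n hn⟩,
    fun K hK => ⟨C * K, by positivity, fun j η hj hη hηK => ?_⟩⟩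
  have hpos (k) : 0 < |η k| := (by positivity : (0 : ℝ) < 5 / 8 * 2 ^ j k).trans_le (hη k).1
  have hratio := div_pos (hpos (Fin.last (2 * n))) (hpos ⟨2 * n - 1, by omega⟩)
  calc _ ≤ C * (∏ k ∈ Finset.univ.erase (Fin.last (2 * n)), |η k|) *
        (1 + Real.log (|η (Fin.last (2 * n))| / |η ⟨2 * n - 1, by omega⟩|)) :=
      norm_integral_symbol_le_of_dyadic n hn j η hj hη
    _ ≤ C * (∏ k ∈ Finset.univ.erase (Fin.last (2 * n)), |η k|) * K := by
      gcongr
      linarith [Real.log_le_sub_one_of_pos hratio]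
    _ = C * K * ∏ k ∈ Finset.univ.erase (Fin.last (2 * n)), |η k| := by ring
end
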